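/- Let p be a multivariate polynomial in n real variables, x ∈ ℝⁿ an input, x̃ ∈ ℝⁿ a baseline, and Δ_j = x_j − x̃_j. Then the Integrated Gradient attribution of feature i for the function y ↦ eval y p equals a_i = Σ_{α ≠ 0} (α_i / |α|) · (1/α!) · eval x̃ (∂^α p) · Π_j Δ_j^{α_j}, where the sum ranges over nonzero multi-indices α : Fin n →₀ ℕ and |α| = Σ_j α_j. That is, Integrated Gradient is a context-aware high-order attribution: it assigns to x_i its full first-order and high-order independent terms, plus the fraction α_i/|α| of every high-order interactive term involving x_i. -/

import Mathlib

open MvPolynomial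

/-- Iterated formal partial derivative `∂^α p`: apply `pderiv j` exactly `α j`
times for each variable `j`. -/
noncomputable def pderivPow {n : ℕ} (α : Fin n →₀ ℕ) (p : MvPolynomial (Fin n) ℝ) :
    MvPolynomial (Fin n) ℝ :=
  (List.finRange n).foldl (fun q j => (pderiv j)^[α j] q) p


lemma hasFDerivAt_mvpoly_eval {n : ℕ} (p : MvPolynomial (Fin n) ℝ) (z : Fin n → ℝ) :
    HasFDerivAt (fun y => eval y p)
      (∑ j, eval z (pderiv j p) • (ContinuousLinearMap.proj j : (Fin n → ℝ) →L[ℝ] ℝ)) z := by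
  induction p using MvPolynomial.induction_on with
  | C a =>
      have : (∑ j, eval z (pderiv j (C a : MvPolynomial (Fin n) ℝ)) •
          (ContinuousLinearMap.proj j : (Fin n → ℝ) →L[ℝ] ℝ)) = 0 := by
        simp [pderiv_C]
      rw [this]
      simpa using hasFDerivAt_const (eval z (C a : MvPolynomial (Fin n) ℝ)) z
  | add p q hp hq =>
      have h := hp.add hq
      refine HasFDerivAt.congr_fderiv (HasFDerivAt.congr_of_eventuallyEq h
        (Filter.EventuallyEq.of_eq ?_)) ?_
      · funext y; simp
      · rw [← Finset.sum_add_distrib]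
        congr 1; funext j; simp [add_smul]
  | mul_X p j hp =>
      have hX : HasFDerivAt (fun y : Fin n → ℝ => y j)
          (ContinuousLinearMap.proj j : (Fin n → ℝ) →L[ℝ] ℝ) z :=
        (ContinuousLinearMap.proj j : (Fin n → ℝ) →L[ℝ] ℝ).hasFDerivAt
      have h := hp.mul hX
      refine HasFDerivAt.congr_fderiv (HasFDerivAt.congr_of_eventuallyEq h
        (Filter.EventuallyEq.of_eq ?_)) ?_
      · funext y; simp
      · classical
        rw [Finset.smul_sum]
        have : ∀ k : Fin n, eval z (pderiv k (p * X j)) •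
            (ContinuousLinearMap.proj k : (Fin n → ℝ) →L[ℝ] ℝ) =
            (if k = j then eval z p • (ContinuousLinearMap.proj j : (Fin n → ℝ) →L[ℝ] ℝ) else 0)
            + z j • eval z (pderiv k p) • (ContinuousLinearMap.proj k : (Fin n → ℝ) →L[ℝ] ℝ) := by
          intro k
          rw [pderiv_mul, pderiv_X]
          by_cases hk : k = j
          · subst hk; simp [Pi.single_apply, smul_smul, add_smul, mul_comm, add_comm]
          · simp [Pi.single_apply, Ne.symm hk, hk, smul_smul, mul_comm]
        rw [Finset.sum_congr rfl (fun k _ => this k), Finset.sum_add_distrib,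
          Finset.sum_ite_eq' Finset.univ j]
        simp [add_comm]

lemma fderiv_mvpoly_eval_single {n : ℕ} (p : MvPolynomial (Fin n) ℝ) (z : Fin n → ℝ) (i : Fin n) :
    fderiv ℝ (fun y => eval y p) z (Pi.single i 1) = eval z (pderiv i p) := by
  classical
  rw [(hasFDerivAt_mvpoly_eval p z).fderiv]
  simp [ContinuousLinearMap.proj, Pi.single_apply]

lemma continuous_mvpoly_eval {n : ℕ} (p : MvPolynomial (Fin n) ℝ) :
    Continuous (fun y : Fin n → ℝ => eval y p) := by
  rw [continuous_iff_continuousAt]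
  exact fun z => (hasFDerivAt_mvpoly_eval p z).continuousAt


lemma pderiv_iterate_monomial {n : ℕ} (j : Fin n) (k : ℕ) (d : Fin n →₀ ℕ) (c : ℝ) :
    (pderiv j)^[k] (monomial d c)
      = monomial (d - Finsupp.single j k) (c * (d j).descFactorial k) := by
  induction k with
  | zero => simp
  | succ k ih =>
      rw [Function.iterate_succ_apply', ih, pderiv_monomial]
      have h1 : d - Finsupp.single j k - Finsupp.single j 1 = d - Finsupp.single j (k + 1) := by
        rw [tsub_tsub, ← Finsupp.single_add]
      have h2 : (d - Finsupp.single j k) j = d j - k := by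
        simp [Finsupp.tsub_apply]
      rw [h1, h2]
      congr 1
      rw [Nat.descFactorial_succ, Nat.cast_mul]
      ring

lemma foldl_pderiv_monomial {n : ℕ} (α : Fin n →₀ ℕ) :
    ∀ (l : List (Fin n)), l.Nodup → ∀ (d : Fin n →₀ ℕ) (c : ℝ),
    l.foldl (fun q j => (pderiv j)^[α j] q) (monomial d c)
      = monomial (d - (l.map (fun j => Finsupp.single j (α j))).sum)
          (c * (l.map (fun j => ((d j).descFactorial (α j) : ℝ))).prod) := by
  intro l
  induction l with
  | nil => intro _ d c; simp
  | cons j l ih =>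
      intro hl d c
      have hj : j ∉ l := (List.nodup_cons.1 hl).1
      have hl' : l.Nodup := (List.nodup_cons.1 hl).2
      rw [List.foldl_cons, pderiv_iterate_monomial, ih hl']
      have hd : ∀ j' ∈ l, (d - Finsupp.single j (α j)) j' = d j' := by
        intro j' hj'
        have : j' ≠ j := fun h => hj (h ▸ hj')
        simp [Finsupp.tsub_apply, Finsupp.single_apply, Ne.symm this]
      congr 1
      · rw [tsub_tsub, List.map_cons, List.sum_cons]
      · rw [List.map_cons, List.prod_cons]
        rw [List.map_congr_left (fun j' hj' => by rw [hd j' hj'])]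
        ring

lemma pderivPow_monomial {n : ℕ} (α d : Fin n →₀ ℕ) (c : ℝ) :
    pderivPow α (monomial d c)
      = monomial (d - α) (c * ∏ j, ((d j).descFactorial (α j) : ℝ)) := by
  have hsum : ((List.finRange n).map (fun j => Finsupp.single j (α j))).sum = α := by
    rw [← Fin.sum_univ_def]
    ext k
    rw [Finsupp.finset_sum_apply]
    simp [Finsupp.single_apply]
  rw [pderivPow, foldl_pderiv_monomial α _ (List.nodup_finRange n), hsum, ← Fin.prod_univ_def]


lemma pderivPow_sum {n : ℕ} {ι : Type*} (α : Fin n →₀ ℕ) (s : Finset ι)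
    (f : ι → MvPolynomial (Fin n) ℝ) :
    pderivPow α (∑ d ∈ s, f d) = ∑ d ∈ s, pderivPow α (f d) := by
  have key : ∀ (l : List (Fin n)) (g : ι → MvPolynomial (Fin n) ℝ),
      l.foldl (fun q j => (pderiv j)^[α j] q) (∑ d ∈ s, g d)
        = ∑ d ∈ s, l.foldl (fun q j => (pderiv j)^[α j] q) (g d) := by
    intro l
    induction l with
    | nil => intro g; simp
    | cons j l ih =>
        intro g
        rw [List.foldl_cons]
        have hit : ∀ (k : ℕ) (q : ι → MvPolynomial (Fin n) ℝ),
            (pderiv j)^[k] (∑ d ∈ s, q d) = ∑ d ∈ s, (pderiv j)^[k] (q d) := by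
          intro k
          induction k with
          | zero => intro q; simp
          | succ k ihk =>
              intro q
              rw [Function.iterate_succ_apply, map_sum, ihk fun d => pderiv j (q d)]
              simp [Function.iterate_succ_apply]
        rw [hit, ih (fun d => (pderiv j)^[α j] (g d))]
        simp
  exact key _ f

lemma prod_add_pow_finsupp {n : ℕ} (a b : Fin n → ℝ) (e : Fin n →₀ ℕ) :
    ∏ j, (a j + b j) ^ (e j)
      = ∑ β ∈ Finset.Iic e,
          ∏ j, (((e j).choose (β j) : ℝ) * a j ^ (e j - β j) * b j ^ (β j)) := by
  classical
  have h1 : ∀ j : Fin n, (a j + b j) ^ (e j)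
      = ∑ k ∈ Finset.range (e j + 1),
          (((e j).choose k : ℝ) * a j ^ (e j - k) * b j ^ k) := by
    intro j
    rw [add_comm (a j), add_pow]
    exact Finset.sum_congr rfl fun k _ => by ring
  rw [Finset.prod_congr rfl fun j _ => h1 j, Finset.prod_univ_sum]
  refine Finset.sum_nbij' (fun g => Finsupp.equivFunOnFinite.symm g) (fun β => ⇑β) ?_ ?_ ?_ ?_ ?_
  · intro g hg
    simp only [Fintype.mem_piFinset, Finset.mem_range] at hg
    rw [Finset.mem_Iic, Finsupp.le_def]
    intro j
    simpa [Nat.lt_succ_iff] using hg j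
  · intro β hβ
    rw [Finset.mem_Iic, Finsupp.le_def] at hβ
    simp only [Fintype.mem_piFinset, Finset.mem_range]
    intro j
    exact Nat.lt_succ_of_le (hβ j)
  · intro g hg
    funext j; simp
  · intro β hβ; simp
  · intro g hg
    simp




-- term in "choose" form
lemma term_choose {n : ℕ} (xt Δ : Fin n → ℝ) (d α : Fin n →₀ ℕ) (c : ℝ) :
    (1 / ∏ j, (Nat.factorial (α j) : ℝ)) * eval xt (pderivPow α (monomial d c)) *
        ∏ j, Δ j ^ α j
      = c * ∏ j, (((d j).choose (α j) : ℝ) * xt j ^ (d j - α j) * Δ j ^ (α j)) := by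
  classical
  rw [pderivPow_monomial, eval_monomial]
  rw [Finsupp.prod_fintype _ _ (fun j => pow_zero _)]
  have hdesc : ∏ j, ((d j).descFactorial (α j) : ℝ)
      = (∏ j, (Nat.factorial (α j) : ℝ)) * ∏ j, (((d j).choose (α j)) : ℝ) := by
    rw [← Finset.prod_mul_distrib]
    exact Finset.prod_congr rfl fun j _ => by
      rw [Nat.descFactorial_eq_factorial_mul_choose, Nat.cast_mul]
  have hΦ : (∏ j, (Nat.factorial (α j) : ℝ)) ≠ 0 :=
    Finset.prod_ne_zero_iff.2 fun j _ => Nat.cast_ne_zero.2 (Nat.factorial_ne_zero _)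
  have htsub : ∀ j : Fin n, (d - α) j = d j - α j := fun j => Finsupp.tsub_apply d α j
  simp only [htsub]
  rw [hdesc]
  rw [Finset.prod_mul_distrib, Finset.prod_mul_distrib]
  field_simp

lemma monomial_case {n : ℕ} (x xt : Fin n → ℝ) (i : Fin n) (d D : Fin n →₀ ℕ) (hdD : d ≤ D)
    (c : ℝ) :
    (x i - xt i) * ∫ t in (0:ℝ)..1, eval (xt + t • (x - xt)) (pderiv i (monomial d c))
      = ∑ α ∈ Finset.Iic D,
          ((α i : ℝ) / ((∑ j, α j : ℕ) : ℝ)) *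
            ((1 / ∏ j, (Nat.factorial (α j) : ℝ)) * eval xt (pderivPow α (monomial d c)) *
              ∏ j, (x j - xt j) ^ α j) := by
  classical
  -- Step A : shrink the sum to `Iic d`
  rw [← Finset.sum_subset (Finset.Iic_subset_Iic.2 hdD) (fun α hα hα' => by
    rw [Finset.mem_Iic] at hα'
    obtain ⟨j, hj⟩ : ∃ j, d j < α j := by
      by_contra h
      push_neg at h
      exact hα' (Finsupp.le_def.2 h)
    rw [pderivPow_monomial]
    have h0 : ∏ j, ((d j).descFactorial (α j) : ℝ) = 0 :=
      Finset.prod_eq_zero (Finset.mem_univ j)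
        (by rw [Nat.descFactorial_eq_zero_iff_lt.2 hj, Nat.cast_zero])
    rw [h0, mul_zero, map_zero, map_zero, mul_zero, zero_mul, mul_zero])]
  -- Step B : rewrite every term in choose form
  rw [Finset.sum_congr rfl fun α _ => by rw [term_choose xt (fun j => x j - xt j) d α c]]
  rcases Nat.eq_zero_or_pos (d i) with hdi | hdi
  · -- trivial case `d i = 0`
    have h1 : pderiv i (monomial d c) = 0 := by
      rw [pderiv_monomial, hdi]; simp
    rw [h1]
    simp only [map_zero, intervalIntegral.integral_zero, mul_zero]
    symm
    apply Finset.sum_eq_zero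
    intro α hα
    have h2 : α i = 0 := Nat.le_zero.1 (hdi ▸ Finsupp.le_def.1 (Finset.mem_Iic.1 hα) i)
    rw [h2]; simp
  · obtain ⟨m, hd⟩ : ∃ m, d i = m + 1 := ⟨d i - 1, by omega⟩
    set e : Fin n →₀ ℕ := d - Finsupp.single i 1 with he
    have hsle : Finsupp.single i 1 ≤ d := by
      rw [Finsupp.single_le_iff]; omega
    have hed : e + Finsupp.single i 1 = d := tsub_add_cancel_of_le hsle
    have hei : e i = m := by
      rw [he, Finsupp.tsub_apply, Finsupp.single_eq_same, hd]
      omega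
    have hej : ∀ j, j ≠ i → e j = d j := fun j hj => by
      rw [he, Finsupp.tsub_apply, Finsupp.single_eq_of_ne' (Ne.symm hj), Nat.sub_zero]
    -- LHS integrand expansion
    have hint : ∀ t : ℝ, eval (xt + t • (x - xt)) (pderiv i (monomial d c))
        = ∑ β ∈ Finset.Iic e,
            (c * (d i) *
              ∏ j, (((e j).choose (β j) : ℝ) * xt j ^ (e j - β j) * (x j - xt j) ^ (β j)))
              * t ^ (∑ j, β j) := by
      intro t
      rw [pderiv_monomial, eval_monomial, Finsupp.prod_fintype _ _ (fun j => pow_zero _),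
        ← he]
      have hyj : ∀ j, (xt + t • (x - xt)) j = xt j + t * (x j - xt j) := fun j => by
        simp
      have hprod : ∏ j, ((xt + t • (x - xt)) j) ^ (e j)
          = ∑ β ∈ Finset.Iic e,
              (∏ j, (((e j).choose (β j) : ℝ) * xt j ^ (e j - β j) * (x j - xt j) ^ (β j)))
                * t ^ (∑ j, β j) := by
        calc ∏ j, ((xt + t • (x - xt)) j) ^ (e j)
            = ∏ j, (xt j + t * (x j - xt j)) ^ (e j) := by
              exact Finset.prod_congr rfl fun j _ => by rw [hyj]
          _ = ∑ β ∈ Finset.Iic e,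
              ∏ j, (((e j).choose (β j) : ℝ) * xt j ^ (e j - β j)
                * (t * (x j - xt j)) ^ (β j)) :=
              prod_add_pow_finsupp xt (fun j => t * (x j - xt j)) e
          _ = _ := by
              refine Finset.sum_congr rfl fun β _ => ?_
              rw [← Finset.prod_pow_eq_pow_sum, ← Finset.prod_mul_distrib]
              exact Finset.prod_congr rfl fun j _ => by rw [mul_pow]; ring
      rw [hprod, Finset.mul_sum]
      exact Finset.sum_congr rfl fun β _ => by ring
    -- integrate
    have hLHS : (∫ t in (0:ℝ)..1, eval (xt + t • (x - xt)) (pderiv i (monomial d c)))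
        = ∑ β ∈ Finset.Iic e,
            (c * (d i) *
              ∏ j, (((e j).choose (β j) : ℝ) * xt j ^ (e j - β j) * (x j - xt j) ^ (β j)))
              * (1 / ((∑ j, β j : ℕ) + 1 : ℝ)) := by
      rw [intervalIntegral.integral_congr (g := fun t => ∑ β ∈ Finset.Iic e,
            (c * (d i) *
              ∏ j, (((e j).choose (β j) : ℝ) * xt j ^ (e j - β j) * (x j - xt j) ^ (β j)))
              * t ^ (∑ j, β j)) (fun t _ => hint t)]
      rw [intervalIntegral.integral_finset_sum (fun β _ =>
        ((continuous_const.mul (continuous_pow _) :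
          Continuous fun t : ℝ => _ * t ^ (∑ j, β j)).intervalIntegrable 0 1))]
      refine Finset.sum_congr rfl fun β _ => ?_
      rw [intervalIntegral.integral_const_mul, integral_pow]
      norm_num
    rw [hLHS, Finset.mul_sum]
    conv_rhs => rw [← Finset.sum_filter_of_ne (p := fun α => α i ≠ 0) (fun α _ h => by
        intro hαi
        rw [hαi] at h
        simp at h)]
    refine Finset.sum_nbij' (fun β => β + Finsupp.single i 1)
      (fun α => α - Finsupp.single i 1) ?_ ?_ ?_ ?_ ?_
    · intro β hβ
      rw [Finset.mem_Iic] at hβ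
      rw [Finset.mem_filter, Finset.mem_Iic]
      constructor
      · rw [← hed]; exact add_le_add_left hβ _
      · simp
    · intro α hα
      rw [Finset.mem_filter, Finset.mem_Iic] at hα
      rw [Finset.mem_Iic, he]
      exact tsub_le_tsub_right hα.1 _
    · intro β hβ
      exact add_tsub_cancel_right _ _
    · intro α hα
      rw [Finset.mem_filter, Finset.mem_Iic] at hα
      refine tsub_add_cancel_of_le ?_
      rw [Finsupp.single_le_iff]
      have := hα.2
      omega
    · intro β hβ
      rw [Finset.mem_Iic] at hβ
      set γ : Fin n →₀ ℕ := β + Finsupp.single i 1 with hγ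
      have hαi : γ i = β i + 1 := by
        rw [hγ, Finsupp.add_apply, Finsupp.single_eq_same]
      have hαj : ∀ j, j ≠ i → γ j = β j := fun j hj => by
        rw [hγ, Finsupp.add_apply, Finsupp.single_eq_of_ne' (Ne.symm hj), Nat.add_zero]
      have hsum : (∑ j, γ j) = (∑ j, β j) + 1 := by
        simp only [hγ, Finsupp.add_apply, Finset.sum_add_distrib]
        congr 1
        simp [Finsupp.single_apply]
      rw [hsum,
        ← Finset.mul_prod_erase Finset.univ _ (Finset.mem_univ i),
        ← Finset.mul_prod_erase Finset.univ _ (Finset.mem_univ i)]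
      have hP : (∏ j ∈ Finset.univ.erase i,
            (((d j).choose (γ j) : ℝ)
              * xt j ^ (d j - γ j)
              * (x j - xt j) ^ (γ j)))
          = ∏ j ∈ Finset.univ.erase i,
            (((e j).choose (β j) : ℝ) * xt j ^ (e j - β j) * (x j - xt j) ^ (β j)) := by
        refine Finset.prod_congr rfl fun j hj => ?_
        have hji : j ≠ i := (Finset.mem_erase.1 hj).1
        rw [hαj j hji, hej j hji]
      rw [hP, hαi, hei, hd]
      have hexp : m + 1 - (β i + 1) = m - β i := by omega
      rw [hexp]
      have hkey : ((m : ℝ) + 1) * (m.choose (β i) : ℝ)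
          = ((m + 1).choose (β i + 1) : ℝ) * ((β i : ℝ) + 1) := by
        exact_mod_cast Nat.add_one_mul_choose_eq m (β i)
      have hS : ((∑ j, β j : ℕ) : ℝ) + 1 ≠ 0 := by positivity
      push_cast
      rw [pow_succ]
      field_simp
      linear_combination (c * xt i ^ (m - β i) * (x i - xt i) ^ β i * (x i - xt i) *
        ∏ j ∈ Finset.univ.erase i,
          (((e j).choose (β j) : ℝ) * xt j ^ (e j - β j) * (x j - xt j) ^ β j)) * hkey


/-- Integrated Gradient on a polynomial model is a context-aware
high-order attribution: the attribution of feature `i` is the sum over all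
nonzero multi-indices `α` of the fraction `α i / |α|` of the Taylor term
`(1/α!) ∂^α p (xt) ∏ j Δ j ^ α j`. -/
theorem integrated_gradient_taylor_reformulation
    (n : ℕ) (p : MvPolynomial (Fin n) ℝ) (x xt : Fin n → ℝ) (i : Fin n) :
    (x i - xt i) *
        ∫ α in (0:ℝ)..1,
          fderiv ℝ (fun y => eval y p) (xt + α • (x - xt)) (Pi.single i 1) =
      ∑ᶠ (α : Fin n →₀ ℕ) (_ : α ≠ 0),
        ((α i : ℝ) / ((∑ j, α j : ℕ) : ℝ)) *
          ((1 / ∏ j, (Nat.factorial (α j) : ℝ)) * eval xt (pderivPow α p) *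
            ∏ j, (x j - xt j) ^ α j) := by
  classical
  simp only [fderiv_mvpoly_eval_single]
  set D : Fin n →₀ ℕ := p.support.sup id with hD
  set g : (Fin n →₀ ℕ) → ℝ := fun α =>
    ((α i : ℝ) / ((∑ j, α j : ℕ) : ℝ)) *
      ((1 / ∏ j, (Nat.factorial (α j) : ℝ)) * eval xt (pderivPow α p) *
        ∏ j, (x j - xt j) ^ α j) with hg
  have h2 : (∑ᶠ (α : Fin n →₀ ℕ) (_ : α ≠ 0), g α) = ∑ᶠ α, g α := by
    refine finsum_congr fun α => ?_
    rcases eq_or_ne α 0 with h | h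
    · rw [finsum_eq_if, if_neg (by simp [h])]
      subst h
      simp [hg]
    · rw [finsum_eq_if, if_pos h]
  have h3 : Function.support g ⊆ ↑(Finset.Iic D) := by
    intro α hα
    rw [Finset.coe_Iic, Set.mem_Iic]
    by_contra hcontra
    apply hα
    have hp : pderivPow α p = 0 := by
      conv_lhs => rw [p.as_sum]
      rw [pderivPow_sum]
      apply Finset.sum_eq_zero
      intro d hd
      rw [pderivPow_monomial]
      have hdd : ¬ α ≤ d := fun hle => hcontra (hle.trans (Finset.le_sup (f := id) hd))
      obtain ⟨j, hj⟩ : ∃ j, d j < α j := by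
        by_contra hc
        push_neg at hc
        exact hdd (Finsupp.le_def.2 hc)
      rw [Finset.prod_eq_zero (Finset.mem_univ j)
        (by rw [Nat.descFactorial_eq_zero_iff_lt.2 hj, Nat.cast_zero]), mul_zero, map_zero]
    simp [hg, hp]
  rw [h2, finsum_eq_finset_sum_of_support_subset g h3]
  have h4 : ∀ α : Fin n →₀ ℕ, g α
      = ∑ d ∈ p.support,
          ((α i : ℝ) / ((∑ j, α j : ℕ) : ℝ)) *
            ((1 / ∏ j, (Nat.factorial (α j) : ℝ))
              * eval xt (pderivPow α (monomial d (coeff d p))) *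
              ∏ j, (x j - xt j) ^ α j) := by
    intro α
    rw [hg]
    dsimp only
    conv_lhs => rw [p.as_sum]
    rw [pderivPow_sum, map_sum, Finset.mul_sum, Finset.sum_mul, Finset.mul_sum]
  rw [Finset.sum_congr rfl fun α _ => h4 α, Finset.sum_comm]
  conv_lhs => rw [p.as_sum]
  simp only [map_sum]
  have hcont : ∀ d : Fin n →₀ ℕ, Continuous fun t : ℝ =>
      eval (xt + t • (x - xt)) (pderiv i (monomial d (coeff d p))) := fun d =>
    (continuous_mvpoly_eval _).comp (continuous_const.add (continuous_id.smul continuous_const))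
  rw [intervalIntegral.integral_finset_sum (fun d _ => (hcont d).intervalIntegrable 0 1)]
  rw [Finset.mul_sum]
  exact Finset.sum_congr rfl fun d hd =>
    monomial_case x xt i d D (Finset.le_sup (f := id) hd) (coeff d p)
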